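/- Pointwise TreeExplorer length bound: for every rooted plane tree T with n(T) = n ≥ 2 nodes and l(T) = l leaves, the TreeExplorer code TE(T) has length at most 2n − 2 bits, and its length is strictly less than 2n − 2 whenever 2l ≠ n. -/

import Mathlib

/-- A rooted plane tree: a root node together with a finite ordered list of
subtrees, the subtrees rooted at the children of the root. -/
inductive PTree : Type
  | node : List PTree → PTree

namespace PTree

/-- The subtrees rooted at the children of the root. -/
def children : PTree → List PTree
  | node ts => ts

mutual
/-- Number of nodes of a rooted plane tree. -/
def numNodes : PTree → ℕ
  | node ts => 1 + numNodesList ts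
def numNodesList : List PTree → ℕ
  | [] => 0
  | t :: ts => numNodes t + numNodesList ts
end

mutual
/-- Number of leaves (nodes with no children); a single-node tree has one leaf. -/
def numLeaves : PTree → ℕ
  | node [] => 1
  | node (t :: ts) => numLeaves t + numLeavesList ts
def numLeavesList : List PTree → ℕ
  | [] => 0
  | t :: ts => numLeaves t + numLeavesList ts
end

/-- Symbols of the ternary pit-climbing code: ↓, ↑, ⇑. -/
inductive PCSym : Type
  | down   -- ↓ : fall to the leftmost unexplored leaf
  | up     -- ↑ : climb to a never-before-visited node
  | upSeen -- ⇑ : climb to an already-visited node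
deriving DecidableEq

mutual
/-- Ternary pit-climbing code TPC: empty for a single node; `TPC t ++ [↑]` for a
single child subtree `t`; `TPC t₁ ++ [↑,↓] ++ TPC t₂ ++ [⇑,↓] ++ ⋯ ++ [⇑,↓] ++ TPC tₖ ++ [⇑]`
for children subtrees `t₁, …, tₖ`, `k ≥ 2`. -/
def TPC : PTree → List PCSym
  | node [] => []
  | node [t] => TPC t ++ [.up]
  | node (t₁ :: t₂ :: ts) => TPC t₁ ++ [.up, .down] ++ TPCRest (t₂ :: ts)
/-- TPC contribution of the second-onwards children subtrees. -/
def TPCRest : List PTree → List PCSym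
  | [] => []
  | [t] => TPC t ++ [.upSeen]
  | t :: ts => TPC t ++ [.upSeen, .down] ++ TPCRest ts
end

/-- Binary encoding of the pit-climbing symbols: ↓ ↦ 0, ⇑ ↦ 00, ↑ ↦ 1. -/
def pcBits : PCSym → List Bool
  | .down => [false]
  | .upSeen => [false, false]
  | .up => [true]

/-- Binary pit-climbing code PC. -/
def PC (T : PTree) : List Bool := (TPC T).flatMap pcBits

lemma numNodesList_append (a b : List PTree) :
    numNodesList (a ++ b) = numNodesList a + numNodesList b := by
  induction a with
  | nil => simp [numNodesList]
  | cons t ts ih => simp [numNodesList, ih]; ring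

lemma numNodesList_children_flatten (l : List PTree) :
    numNodesList ((l.map children).flatten) + l.length = numNodesList l := by
  induction l with
  | nil => simp [numNodesList]
  | cons t ts ih =>
      cases t with
      | node cs =>
        simp only [List.map_cons, List.flatten_cons, numNodesList_append,
          List.length_cons, numNodesList, children, numNodes]
        omega

/-- Breadth-first list of the sibling groups of a tree, starting from the list
`gs` of sibling groups at the current level: the groups of the current level
followed by the groups of children on the levels below, level by level and
left to right within each level. -/
def bfsGroups (gs : List (List PTree)) : List (List PTree) :=
  if h : gs.flatten.isEmpty then []
  else gs ++ bfsGroups (gs.flatten.map children)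
termination_by numNodesList gs.flatten
decreasing_by
  have h1 := numNodesList_children_flatten gs.flatten
  have h2 : gs.flatten.length ≠ 0 := by
    intro hh
    rw [List.length_eq_zero_iff] at hh
    exact h (List.isEmpty_iff.mpr hh)
  omega

/-- Symbols of the ternary tunnel-digging code: ←, →, ⇒. -/
inductive TDSym : Type
  | leaf   -- ← : a leaf node
  | inner  -- → : a node with at least one child
  | tunnel -- ⇒ : transition between consecutive non-sibling nodes
deriving DecidableEq

/-- The symbols written for one sibling group: ← for each leaf, → for each
node with at least one child. -/
def groupSyms (g : List PTree) : List TDSym :=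
  g.map (fun t => if t.children.isEmpty then .leaf else .inner)

/-- Ternary tunnel-digging code TTD: the non-root nodes in breadth-first order
(by increasing depth, left to right within each depth), ← for each leaf and →
for each internal node, with ⇒ inserted between every two consecutive
non-sibling nodes. -/
def TTD (T : PTree) : List TDSym :=
  List.intercalate [TDSym.tunnel]
    (((bfsGroups [T.children]).filter (fun g => ¬ g.isEmpty)).map groupSyms)

/-- Binary encoding of the tunnel-digging symbols: ⇒ ↦ 0, → ↦ 00, ← ↦ 1. -/
def tdBits : TDSym → List Bool
  | .tunnel => [false]
  | .inner => [false, false]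
  | .leaf => [true]

/-- Binary tunnel-digging code TD. -/
def TD (T : PTree) : List Bool := (TTD T).flatMap tdBits

/-- TreeExplorer code TE: `0·PC(T)` if `l(T) < n(T)/2`, and `1·TD(T)` otherwise. -/
def TE (T : PTree) : List Bool :=
  if 2 * numLeaves T < numNodes T then false :: PC T else true :: TD T

end PTree

/-!
Both codes have lengths linear in `n` and `l`. In `TPC` there is one `↑` per internal node and
`l - 1` each of `⇑` and `↓`, so `|PC T| = n + 2l - 3`. In `TTD` a non-root node costs one bit as
a leaf and two as an internal node, and the `⇒` separate the nonempty sibling groups, which are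
the children lists of the `n - l` internal nodes, so `|TD T| = 3n - 2l - 3`. `TE` uses `PC`
exactly when `2l < n`, and then `n + 2l - 2 < 2n - 2`; otherwise `3n - 2l - 2 ≤ 2n - 2`, with
equality only when `2l = n`.
-/

namespace List

variable {α β : Type*}

theorem flatMap_intercalate (f : α → List β) (s : List α) (L : List (List α)) :
    (s.intercalate L).flatMap f = (s.flatMap f).intercalate (L.map (·.flatMap f)) := by
  induction L with
  | nil => rfl
  | cons l L ih => cases L <;> simp_all [flatMap_append]

theorem length_intercalate (s : List α) (L : List (List α)) :
    (s.intercalate L).length = (L.map length).sum + (L.length - 1) * s.length := by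
  induction L with
  | nil => simp
  | cons l L ih =>
    cases L with
    | nil => simp
    | cons l' L =>
      simp only [intercalate_cons_cons, length_append, map_cons, sum_cons, length_cons] at ih ⊢
      rw [ih]
      simp only [add_tsub_cancel_right]
      ring

end List

namespace PTree

@[simp] theorem children_node (ts : List PTree) : (node ts).children = ts := rfl

theorem numLeaves_node {ts : List PTree} (h : ts ≠ []) :
    numLeaves (node ts) = numLeavesList ts := by
  cases ts with
  | nil => exact absurd rfl h
  | cons t ts => rfl

theorem numLeavesList_append (a b : List PTree) :
    numLeavesList (a ++ b) = numLeavesList a + numLeavesList b := by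
  induction a with
  | nil => simp [numLeavesList]
  | cons t ts ih => simp [numLeavesList, ih]; ring

mutual
theorem length_PC (t : PTree) : (PC t).length + 3 = numNodes t + 2 * numLeaves t := by
  match t with
  | node [] => rfl
  | node [t] =>
    have := length_PC t
    simp only [PC, TPC, List.flatMap_append, List.flatMap_cons, List.flatMap_nil, pcBits,
      List.length_append, List.length_cons, List.length_nil, numNodes, numNodesList, numLeaves,
      numLeavesList] at this ⊢
    omega
  | node (t₁ :: t₂ :: ts) =>
    have := length_PC t₁
    have := length_flatMap_TPCRest (t₂ :: ts) (List.cons_ne_nil _ _)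
    simp only [PC, TPC, List.flatMap_append, List.flatMap_cons, List.flatMap_nil, pcBits,
      List.length_append, List.length_cons, List.length_nil, numNodes, numNodesList, numLeaves,
      numLeavesList] at *
    omega

theorem length_flatMap_TPCRest (ts : List PTree) (h : ts ≠ []) :
    ((TPCRest ts).flatMap pcBits).length + 1 = numNodesList ts + 2 * numLeavesList ts := by
  match ts with
  | [] => exact absurd rfl h
  | [t] =>
    have := length_PC t
    simp only [PC, TPCRest, List.flatMap_append, List.flatMap_cons, List.flatMap_nil, pcBits,
      List.length_append, List.length_cons, List.length_nil, numNodesList, numLeavesList] at *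
    omega
  | t :: t' :: ts =>
    have := length_PC t
    have := length_flatMap_TPCRest (t' :: ts) (List.cons_ne_nil _ _)
    simp only [PC, TPCRest, List.flatMap_append, List.flatMap_cons, List.flatMap_nil, pcBits,
      List.length_append, List.length_cons, List.length_nil, numNodesList, numLeavesList] at *
    omega
end

theorem numLeavesList_eq_countP_add (F : List PTree) :
    numLeavesList F =
      F.countP (·.children.isEmpty) + numLeavesList (F.map children).flatten := by
  induction F with
  | nil => rfl
  | cons t F ih =>
    obtain ⟨_ | ⟨c, cs⟩⟩ := t
    · simp [numLeavesList, numLeaves, List.countP_cons, ih]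
      omega
    · simp [numLeavesList, numLeavesList_append, numLeaves, ih]
      omega

theorem length_flatten_bfsGroups (gs : List (List PTree)) :
    (bfsGroups gs).flatten.length = numNodesList gs.flatten := by
  fun_induction bfsGroups gs with
  | case1 gs h => rw [List.isEmpty_iff.mp h]; rfl
  | case2 gs h ih =>
    have := numNodesList_children_flatten gs.flatten
    simp only [List.flatten_append, List.length_append, ih]
    omega

theorem countP_flatten_bfsGroups_leaf (gs : List (List PTree)) :
    (bfsGroups gs).flatten.countP (·.children.isEmpty) = numLeavesList gs.flatten := by
  fun_induction bfsGroups gs with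
  | case1 gs h => rw [List.isEmpty_iff.mp h]; rfl
  | case2 gs h ih =>
    rw [List.flatten_append, List.countP_append, ih, numLeavesList_eq_countP_add gs.flatten]

theorem countP_bfsGroups_ne_nil (gs : List (List PTree)) :
    (bfsGroups gs).countP (!·.isEmpty) =
      gs.countP (!·.isEmpty) + (bfsGroups gs).flatten.countP (!·.children.isEmpty) := by
  fun_induction bfsGroups gs with
  | case1 gs h =>
    symm
    simpa [List.countP_eq_zero] using h
  | case2 gs h ih =>
    simp only [List.countP_append, List.flatten_append, ih, List.countP_map, Function.comp_def]

theorem length_flatMap_groupSyms (g : List PTree) :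
    ((groupSyms g).flatMap tdBits).length = g.length + g.countP (!·.children.isEmpty) := by
  induction g with
  | nil => rfl
  | cons t g ih =>
    obtain ⟨_ | ⟨c, cs⟩⟩ := t <;>
      simp [groupSyms, tdBits] at ih ⊢ <;> omega

theorem length_TD (T : PTree) (hT : T.children ≠ []) :
    (TD T).length + 2 * numLeaves T + 3 = 3 * numNodes T := by
  obtain ⟨cs⟩ := T
  rw [children_node] at hT
  set G := bfsGroups [cs]
  have hTD : (TD (node cs)).length = G.flatten.length +
      G.flatten.countP (!·.children.isEmpty) + (G.countP (!·.isEmpty) - 1) := by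
    simp only [TD, TTD, children_node, List.flatMap_intercalate, List.length_intercalate,
      Bool.not_eq_true, Bool.decide_eq_false, List.map_map, Function.comp_def,
      length_flatMap_groupSyms, List.sum_map_add, List.length_map, ← List.countP_eq_length_filter]
    rw [← List.length_flatten, ← List.countP_flatten, List.flatten_filter_not_isEmpty]
    simp [tdBits, G]
  have hN : G.flatten.length = numNodesList cs := by
    simpa using length_flatten_bfsGroups [cs]
  have hL : G.flatten.countP (·.children.isEmpty) = numLeavesList cs := by
    simpa using countP_flatten_bfsGroups_leaf [cs]
  have hG : G.countP (!·.isEmpty) = 1 + G.flatten.countP (!·.children.isEmpty) := by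
    simpa [hT] using countP_bfsGroups_ne_nil [cs]
  have hsplit :=
    List.length_eq_countP_add_countP (fun t : PTree => t.children.isEmpty) (l := G.flatten)
  simp only [Bool.not_eq_true, Bool.decide_eq_false] at hsplit
  rw [numLeaves_node hT, numNodes]
  omega

end PTree

open PTree in
/-- **Pointwise TreeExplorer length bound.** For every rooted plane tree `T`
with `n ≥ 2` nodes and `l` leaves, `TE(T)` has length at most `2n - 2` bits,
and its length is strictly less than `2n - 2` whenever `2l ≠ n`. -/
theorem treeExplorer_length_bound (T : PTree) (hn : 2 ≤ numNodes T) :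
    (TE T).length ≤ 2 * numNodes T - 2 ∧
    (2 * numLeaves T ≠ numNodes T → (TE T).length < 2 * numNodes T - 2) := by
  have hT : T.children ≠ [] := by
    obtain ⟨_ | _⟩ := T
    · exact absurd hn (by decide)
    · exact List.cons_ne_nil _ _
  have hPC := length_PC T
  have hTD := length_TD T hT
  unfold TE
  split_ifs <;> simp only [List.length_cons] <;> omega
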